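/- Fix a with -1 ≤ a < 1, and let 𝔤 = 𝔯_{3,a} be ℝ³ with brackets [e₁,e₂]=e₂, [e₁,e₃]=a e₃. Then the standard inner product making {e₁,e₂,e₃} orthonormal is a solvsoliton: its Ricci operator Ric = -diag(1+a², 1+a, a(1+a)) lies in ℝ·id ⊕ Der(𝔤). -/

import Mathlib

open Matrix

noncomputable section

/-- standard basis of ℝ³ -/
def e (i : Fin 3) : Fin 3 → ℝ := Pi.single i 1

/-- standard inner product on ℝ³ (the basis `e` is orthonormal) -/
def dotp (x y : Fin 3 → ℝ) : ℝ := ∑ i, x i * y i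

/-- Levi-Civita connection of the metric Lie algebra (ℝ³, br, dotp), via
    2⟨∇_X Y, Z⟩ = ⟨[Z,X],Y⟩ + ⟨X,[Z,Y]⟩ + ⟨[X,Y],Z⟩. -/
def nabla (br : (Fin 3 → ℝ) → (Fin 3 → ℝ) → (Fin 3 → ℝ)) (X Y : Fin 3 → ℝ) :
    Fin 3 → ℝ :=
  fun k => (1/2) * (dotp (br (e k) X) Y + dotp X (br (e k) Y) + dotp (br X Y) (e k))

/-- Riemannian curvature R(X,Y)Z = ∇_X∇_Y Z - ∇_Y∇_X Z - ∇_{[X,Y]}Z. -/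
def curv (br : (Fin 3 → ℝ) → (Fin 3 → ℝ) → (Fin 3 → ℝ)) (X Y Z : Fin 3 → ℝ) :
    Fin 3 → ℝ :=
  nabla br X (nabla br Y Z) - nabla br Y (nabla br X Z) - nabla br (br X Y) Z

/-- Ricci operator Ric(X) = Σᵢ R(X,eᵢ)eᵢ. -/
def ric (br : (Fin 3 → ℝ) → (Fin 3 → ℝ) → (Fin 3 → ℝ)) (X : Fin 3 → ℝ) :
    Fin 3 → ℝ :=
  ∑ i, curv br X (e i) (e i)

/-- The bracket of 𝔯_{3,a} : [e₁,e₂]=e₂, [e₁,e₃]=a e₃, [e₂,e₃]=0. -/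
def br3a (a : ℝ) (x y : Fin 3 → ℝ) : Fin 3 → ℝ :=
  ![0,
    x 0 * y 1 - x 1 * y 0,
    a * (x 0 * y 2 - x 2 * y 0)]

/-! The Koszul formula gives the closed form
`∇_X Y = (X 1 * Y 1 + a * X 2 * Y 2, -X 1 * Y 0, -a * X 2 * Y 0)`, from which
`Ric = -diag(1 + a², 1 + a, a(1 + a))` is a direct computation. Since `e 0` acts diagonally on
the abelian ideal spanned by `e 1, e 2`, every `diag(0, s, t)` is a derivation, so choosing
`c = -(1 + a²)` to absorb the `e 0` entry of `Ric` leaves the derivation `diag(0, a² - a, 1 - a)`. -/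

def IsDerivation (br : (Fin 3 → ℝ) → (Fin 3 → ℝ) → (Fin 3 → ℝ))
    (D : Matrix (Fin 3) (Fin 3) ℝ) : Prop :=
  ∀ x y, D *ᵥ br x y = br (D *ᵥ x) y + br x (D *ᵥ y)

theorem isDerivation_br3a_diagonal (a s t : ℝ) :
    IsDerivation (br3a a) (diagonal ![0, s, t]) := by
  intro x y
  ext k
  fin_cases k <;> simp [br3a, mulVec_diagonal] <;> ring

theorem nabla_br3a (a : ℝ) (X Y : Fin 3 → ℝ) :
    nabla (br3a a) X Y = ![X 1 * Y 1 + a * (X 2 * Y 2), -(X 1 * Y 0), -(a * (X 2 * Y 0))] := by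
  ext k
  fin_cases k <;> simp [nabla, br3a, dotp, e, Fin.sum_univ_three] <;> ring

theorem ric_br3a (a : ℝ) (x : Fin 3 → ℝ) :
    ric (br3a a) x = -diagonal ![1 + a ^ 2, 1 + a, a * (1 + a)] *ᵥ x := by
  ext k
  fin_cases k <;>
    simp [ric, curv, nabla_br3a, br3a, e, Fin.sum_univ_three, mulVec_diagonal] <;> ring

theorem neg_diagonal_eq_smul_one_add_diagonal (a : ℝ) :
    -diagonal ![1 + a ^ 2, 1 + a, a * (1 + a)] =
      (-(1 + a ^ 2)) • (1 : Matrix (Fin 3) (Fin 3) ℝ) + diagonal ![0, a ^ 2 - a, 1 - a] := by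
  rw [← diagonal_one, ← diagonal_smul, diagonal_add, diagonal_neg]
  congr 1
  ext k
  fin_cases k <;> simp <;> ring

theorem r3a_solvsoliton_general (a : ℝ) :
    (∀ i : Fin 3, ric (br3a a) (e i) =
      Matrix.mulVec (-(Matrix.diagonal ![1 + a^2, 1 + a, a * (1 + a)])) (e i)) ∧
    ∃ (c : ℝ) (D : Matrix (Fin 3) (Fin 3) ℝ),
      (∀ x y, D.mulVec (br3a a x y) =
        br3a a (D.mulVec x) y + br3a a x (D.mulVec y)) ∧
      ∀ i : Fin 3, ric (br3a a) (e i) = c • e i + D.mulVec (e i) := by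
  refine ⟨fun i => ric_br3a a (e i), -(1 + a ^ 2), diagonal ![0, a ^ 2 - a, 1 - a],
    isDerivation_br3a_diagonal a _ _, fun i => ?_⟩
  rw [ric_br3a, neg_diagonal_eq_smul_one_add_diagonal, add_mulVec, smul_mulVec, one_mulVec]

/-- The standard inner product on 𝔯_{3,a} is a solvsoliton:
    Ric = -diag(1+a², 1+a, a(1+a)) ∈ ℝ·id ⊕ Der(𝔤). -/
theorem r3a_solvsoliton (a : ℝ) (ha₁ : -1 ≤ a) (ha₂ : a < 1) :
    (∀ i : Fin 3, ric (br3a a) (e i) =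
      Matrix.mulVec (-(Matrix.diagonal ![1 + a^2, 1 + a, a * (1 + a)])) (e i)) ∧
    ∃ (c : ℝ) (D : Matrix (Fin 3) (Fin 3) ℝ),
      (∀ x y, D.mulVec (br3a a x y) =
        br3a a (D.mulVec x) y + br3a a x (D.mulVec y)) ∧
      ∀ i : Fin 3, ric (br3a a) (e i) = c • e i + D.mulVec (e i) :=
  r3a_solvsoliton_general a
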